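/- arXiv:1803.10436 — 2 statements merged into one kernel-verified Lean document; each statement's English description precedes it below -/
import Mathlib

section
/- Let g be a finite-dimensional solvable real Lie algebra and ⟨·,·⟩ a nil-invariant symmetric bilinear form on g (it suffices that for every X ∈ g the nilpotent part ad(X)_n of the Jordan decomposition of ad(X) is skew-symmetric with respect to ⟨·,·⟩). Then ⟨·,·⟩ is invariant; in particular, g^⊥ is an ideal of g. -/
/-!
Go down the derived series: for `X ∈ D^i g` the range of `(ad X)²` lies in `D^{i+1} g`, where
every `ad w` is already skew. Split `g = g₀ ⊕ g₁` by the Fitting decomposition of `f = ad X`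
(`f` nilpotent on `g₀`, invertible on `g₁`) and write `f = s + n` with `n` skew. The semisimple
part `s` vanishes on `g₀`; `g₀ ⟂ g₁` because `g₁ = [X, g₁]` and `[g₀, g₁] ⊆ g₁`; and for
`u, v ∈ g₁` the skewness of `ad u` and `ad v` gives `⟨[X,u],v⟩ = ⟨X,[u,v]⟩ = -⟨u,[X,v]⟩`.
Hence `s`, and with it `ad X`, is skew.
-/

open Module

namespace NilInvariantPaper

open LinearMap (range ker BilinForm)
open LieAlgebra

section StableRange

variable {R M : Type*} [CommRing R] [AddCommGroup M] [Module R M]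

def stableRange (f : Module.End R M) : Submodule R M :=
  ⨅ k, range (f ^ k)

variable {f : Module.End R M}

theorem stableRange_le_range_pow (k : ℕ) : stableRange f ≤ range (f ^ k) :=
  iInf_le _ k

theorem exists_apply_eq_of_mem_stableRange [IsArtinian R M] {v : M} (hv : v ∈ stableRange f) :
    ∃ w ∈ stableRange f, f w = v := by
  obtain ⟨D, hD⟩ := Filter.eventually_atTop.mp f.eventually_iInf_range_pow_eq
  obtain ⟨u, rfl⟩ : v ∈ range (f ^ (D + 1)) := by rwa [← hD _ D.le_succ]
  refine ⟨(f ^ D) u, ?_, by rw [pow_succ', Module.End.mul_apply]⟩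
  rw [stableRange, hD D le_rfl]
  exact LinearMap.mem_range_self _ u

theorem apply_mem_stableRange_of_commute {g : Module.End R M} (hg : Commute g f) {v : M}
    (hv : v ∈ stableRange f) : g v ∈ stableRange f := by
  refine Submodule.mem_iInf _ |>.mpr fun k ↦ ?_
  obtain ⟨u, rfl⟩ := stableRange_le_range_pow k hv
  exact ⟨g u, by rw [← Module.End.mul_apply, ← (hg.pow_right k).eq, Module.End.mul_apply]⟩

theorem exists_isCompl_ker_pow_stableRange [IsNoetherian R M] [IsArtinian R M]
    (f : Module.End R M) : ∃ D, IsCompl (ker (f ^ D)) (stableRange f) := by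
  obtain ⟨D, hcompl, hrange⟩ :=
    (f.eventually_isCompl_ker_pow_range_pow.and f.eventually_iInf_range_pow_eq).exists
  exact ⟨D, by rwa [stableRange, hrange]⟩

end StableRange

theorem apply_eq_zero_of_isNilpotent_sub_of_pow_apply_eq_zero {R M : Type*} [CommRing R]
    [AddCommGroup M] [Module R M] {f s : Module.End R M} (hfs : Commute f s)
    (hs : s.IsFinitelySemisimple) (hn : IsNilpotent (f - s)) {k : ℕ} {z : M}
    (hz : (f ^ k) z = 0) : s z = 0 := by
  have hz' : z ∈ f.genEigenspace 0 k := by simpa [Module.End.mem_genEigenspace_nat] using hz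
  simpa using Module.End.apply_eq_of_mem_of_comm_of_isFinitelySemisimple_of_isNil hz' hfs hs hn

section Lie

variable {R L : Type*} [CommRing R] [LieRing L] [LieAlgebra R L]

theorem lie_mem_stableRange_ad [IsArtinian R L] {X z : L} {N : ℕ}
    (hz : (ad R L X ^ N) z = 0) {v : L} (hv : v ∈ stableRange (ad R L X)) :
    ⁅z, v⁆ ∈ stableRange (ad R L X) := by
  induction N generalizing z v with
  | zero => simp_all
  | succ N ihN =>
    refine Submodule.mem_iInf _ |>.mpr fun k ↦ ?_
    induction k generalizing v with
    | zero => simp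
    | succ k ihk =>
      obtain ⟨w, hw, rfl⟩ := exists_apply_eq_of_mem_stableRange hv
      have hleibniz : ⁅z, ad R L X w⁆ = ad R L X ⁅z, w⁆ - ⁅ad R L X z, w⁆ := by
        simp only [ad_apply, leibniz_lie X z w]
        abel
      rw [hleibniz]
      refine sub_mem ?_ (stableRange_le_range_pow _ (ihN ?_ hw))
      · obtain ⟨u, hu⟩ := ihk hw
        exact ⟨u, by rw [pow_succ', Module.End.mul_apply, hu]⟩
      · rwa [← Module.End.mul_apply, ← pow_succ]

theorem ad_pow_two_apply_mem_derivedSeries_succ {X : L} {i : ℕ}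
    (hX : X ∈ derivedSeries R L i) (u : L) :
    (ad R L X ^ 2) u ∈ derivedSeries R L (i + 1) := by
  have hXu : ⁅X, u⁆ ∈ derivedSeries R L i := by
    rw [← lie_skew]
    exact neg_mem ((derivedSeries R L i).lie_mem hX)
  rw [derivedSeries_def, derivedSeriesOfIdeal_succ, pow_two, Module.End.mul_apply]
  exact LieSubmodule.lie_mem_lie hX hXu

theorem IsSolvable.derivedSeries_induction [IsSolvable L] {P : L → Prop} (h₀ : P 0)
    (h : ∀ i, ∀ X ∈ derivedSeries R L i, (∀ Y ∈ derivedSeries R L (i + 1), P Y) → P X) :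
    ∀ X, P X := by
  obtain ⟨k, hk⟩ := (isSolvable_iff R L).mp ‹_›
  suffices ∀ j i, i + j = k → ∀ X ∈ derivedSeries R L i, P X from
    fun X ↦ this k 0 (zero_add k) X (LieSubmodule.mem_top X)
  intro j
  induction j with
  | zero =>
    rintro i rfl X hX
    rw [add_zero] at hk
    rw [hk, LieSubmodule.mem_bot] at hX
    exact hX ▸ h₀
  | succ j ih => exact fun i hi X hX ↦ h i X hX (ih (i + 1) (by omega))

end Lie

section Form

variable {R M : Type*} [CommRing R] [AddCommGroup M] [Module R M] {B : BilinForm R M}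

theorem isSkewAdjoint_iff {f : Module.End R M} :
    B.IsSkewAdjoint f ↔ ∀ x y, B (f x) y = -B x (f y) := by
  simp [LinearMap.IsSkewAdjoint, LinearMap.IsAdjointPair]

theorem apply_apply_self_eq_zero_of_isSkewAdjoint [NoZeroDivisors R] [CharZero R]
    (hB : B.IsSymm) {f : Module.End R M} (hf : B.IsSkewAdjoint f) (x : M) : B x (f x) = 0 := by
  have h := isSkewAdjoint_iff.mp hf x x
  rw [hB.eq] at h
  exact CharZero.eq_neg_self_iff.mp h

theorem isSkewAdjoint_of_isCompl (hB : B.IsSymm) {N P : Submodule R M} (hNP : IsCompl N P)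
    (horth : ∀ z ∈ N, ∀ v ∈ P, B z v = 0) {s : Module.End R M} (hsN : ∀ z ∈ N, s z = 0)
    (hsP : ∀ v ∈ P, s v ∈ P) (hskew : ∀ u ∈ P, ∀ v ∈ P, B (s u) v = -B u (s v)) :
    B.IsSkewAdjoint s := by
  refine isSkewAdjoint_iff.mpr fun y z ↦ ?_
  obtain ⟨y₀, hy₀, y₁, hy₁, rfl⟩ :=
    Submodule.mem_sup.mp (hNP.sup_eq_top ▸ Submodule.mem_top (x := y))
  obtain ⟨z₀, hz₀, z₁, hz₁, rfl⟩ :=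
    Submodule.mem_sup.mp (hNP.sup_eq_top ▸ Submodule.mem_top (x := z))
  have h₁ : B (s y₁) z₀ = 0 := by rw [hB.eq]; exact horth z₀ hz₀ _ (hsP y₁ hy₁)
  have h₂ : B y₀ (s z₁) = 0 := horth y₀ hy₀ _ (hsP z₁ hz₁)
  simp only [map_add, hsN y₀ hy₀, hsN z₀ hz₀, LinearMap.add_apply, zero_add, h₁, h₂,
    hskew y₁ hy₁ z₁ hz₁]

end Form

section LieForm

variable {R L : Type*} [CommRing R] [LieRing L] [LieAlgebra R L] {B : BilinForm R L}

theorem isSkewAdjoint_ad_iff {u : L} :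
    B.IsSkewAdjoint (ad R L u) ↔ ∀ x y, B ⁅u, x⁆ y = -B x ⁅u, y⁆ :=
  isSkewAdjoint_iff

theorem apply_lie_eq_neg_lie_apply (hB : B.IsSymm) {u v : L}
    (hu : B.IsSkewAdjoint (ad R L u)) (hv : B.IsSkewAdjoint (ad R L v)) (X : L) :
    B ⁅X, u⁆ v = -B u ⁅X, v⁆ := by
  have hu' := isSkewAdjoint_ad_iff.mp hu X v
  have hv' := isSkewAdjoint_ad_iff.mp hv X u
  calc B ⁅X, u⁆ v = -B ⁅u, X⁆ v := by rw [← lie_skew, map_neg, LinearMap.neg_apply]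
    _ = -B X ⁅v, u⁆ := by rw [hu', ← lie_skew v u, map_neg]
    _ = -B ⁅X, v⁆ u := by rw [← hv', ← lie_skew X v, map_neg, LinearMap.neg_apply, neg_neg]
    _ = -B u ⁅X, v⁆ := by rw [hB.eq]

theorem apply_eq_zero_of_pow_apply_eq_zero_of_mem_stableRange [NoZeroDivisors R] [CharZero R]
    [IsArtinian R L] (hB : B.IsSymm) {X : L}
    (hskew : ∀ v ∈ stableRange (ad R L X), B.IsSkewAdjoint (ad R L v))
    {N : ℕ} {z : L} (hz : (ad R L X ^ N) z = 0) {v : L} (hv : v ∈ stableRange (ad R L X)) :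
    B z v = 0 := by
  have hX : ∀ w ∈ stableRange (ad R L X), B X w = 0 := by
    intro w hw
    obtain ⟨w', hw', rfl⟩ := exists_apply_eq_of_mem_stableRange hw
    have h := apply_apply_self_eq_zero_of_isSkewAdjoint hB (hskew w' hw') X
    rw [ad_apply] at h ⊢
    rw [← lie_skew, map_neg, h, neg_zero]
  obtain ⟨v', hv', rfl⟩ := exists_apply_eq_of_mem_stableRange hv
  calc B z ⁅X, v'⁆ = -B ⁅v', X⁆ z := by rw [hB.eq, ← lie_skew, map_neg, LinearMap.neg_apply]
    _ = -B X ⁅z, v'⁆ := by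
      rw [isSkewAdjoint_ad_iff.mp (hskew v' hv') X z, ← lie_skew z v', map_neg]
    _ = 0 := by rw [hX _ (lie_mem_stableRange_ad hz hv'), neg_zero]

end LieForm

theorem isSkewAdjoint_ad_of_range_pow_two {K L : Type*} [Field K] [CharZero K] [LieRing L]
    [LieAlgebra K L] [FiniteDimensional K L] {B : BilinForm K L} (hB : B.IsSymm) {X : L}
    {s n : Module.End K L} (hs : s.IsSemisimple) (hn : IsNilpotent n) (hsn : Commute s n)
    (hX : ad K L X = s + n) (hnB : B.IsSkewAdjoint n)
    (hrange : ∀ w ∈ range (ad K L X ^ 2), B.IsSkewAdjoint (ad K L w)) :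
    B.IsSkewAdjoint (ad K L X) := by
  set f := ad K L X
  have hskew : ∀ v ∈ stableRange f, B.IsSkewAdjoint (ad K L v) :=
    fun v hv ↦ hrange v (stableRange_le_range_pow 2 hv)
  have hfs : Commute f s := hX ▸ (Commute.refl s).add_left hsn.symm
  obtain ⟨D, hD⟩ := exists_isCompl_ker_pow_stableRange f
  have hsB : B.IsSkewAdjoint s := by
    refine isSkewAdjoint_of_isCompl hB hD
      (fun z hz v hv ↦ apply_eq_zero_of_pow_apply_eq_zero_of_mem_stableRange hB hskew hz hv)
      (fun z hz ↦ apply_eq_zero_of_isNilpotent_sub_of_pow_apply_eq_zero hfs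
        hs.isFinitelySemisimple (by rwa [hX, add_sub_cancel_left]) hz)
      (fun v hv ↦ apply_mem_stableRange_of_commute hfs.symm hv) fun u hu v hv ↦ ?_
    have hf : B (f u) v = -B u (f v) := apply_lie_eq_neg_lie_apply hB (hskew u hu) (hskew v hv) X
    simp only [eq_sub_of_add_eq hX.symm, LinearMap.sub_apply, map_sub, hf,
      isSkewAdjoint_iff.mp hnB u v]
    ring
  rw [← LinearMap.mem_skewAdjointSubmodule, hX]
  exact add_mem ((LinearMap.mem_skewAdjointSubmodule s).mpr hsB)
    ((LinearMap.mem_skewAdjointSubmodule n).mpr hnB)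

/-- Baues–Globke, Theorem 1.2.
Let `g` be a finite-dimensional solvable real Lie algebra with a symmetric bilinear form
such that for every `X ∈ g` the nilpotent part `ad(X)_n` of the Jordan decomposition of
`ad(X)` is skew-symmetric (this holds in particular for nil-invariant forms).  Then the
form is invariant; in particular its kernel `g^⊥` is an ideal of `g`. -/
theorem solvable_nilinvariant_is_invariant
    {L : Type*} [LieRing L] [LieAlgebra ℝ L] [Module.Finite ℝ L]
    (B : LinearMap.BilinForm ℝ L) (hsym : ∀ x y : L, B x y = B y x)
    (hsolv : LieAlgebra.IsSolvable L)
    (hnilpart : ∀ (X : L) (σ ν : Module.End ℝ L), σ.IsSemisimple → IsNilpotent ν →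
      Commute σ ν → LieAlgebra.ad ℝ L X = σ + ν →
      ∀ y z : L, B (ν y) z = - B y (ν z)) :
    (∀ X y z : L, B ⁅X, y⁆ z = - B y ⁅X, z⁆) ∧
    (∀ x ∈ LinearMap.ker B, ∀ y : L, ⁅y, x⁆ ∈ LinearMap.ker B) := by
  have hB : B.IsSymm := ⟨hsym⟩
  have had : ∀ X : L, B.IsSkewAdjoint (ad ℝ L X) := by
    refine IsSolvable.derivedSeries_induction (R := ℝ) (by simp [isSkewAdjoint_iff])
      fun i X hX hsucc ↦ ?_
    obtain ⟨n, hn_mem, s, hs_mem, hn, hs, hXns⟩ := (ad ℝ L X).exists_isNilpotent_isSemisimple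
    have hsn : Commute s n := Algebra.commute_of_mem_adjoin_singleton_of_commute hn_mem
      (Algebra.commute_of_mem_adjoin_self hs_mem).symm
    rw [add_comm] at hXns
    refine isSkewAdjoint_ad_of_range_pow_two hB hs hn hsn hXns
      (isSkewAdjoint_iff.mpr (hnilpart X s n hs hn hsn hXns)) ?_
    rintro _ ⟨u, rfl⟩
    exact hsucc _ (ad_pow_two_apply_mem_derivedSeries_succ hX u)
  refine ⟨fun X ↦ isSkewAdjoint_ad_iff.mp (had X), fun x hx y ↦ ?_⟩
  rw [LinearMap.mem_ker] at hx ⊢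
  ext z
  rw [isSkewAdjoint_ad_iff.mp (had y) x z, hx, LinearMap.zero_apply, neg_zero,
    LinearMap.zero_apply]

end NilInvariantPaper
end

section
/- Let g = so_n ⋉ ℝⁿ be the Euclidean Lie algebra, where so_n (real skew-symmetric n×n matrices) acts on ℝⁿ by the standard action, with n ≥ 4, and let ⟨·,·⟩ be a nil-invariant symmetric bilinear form on g. Then the ideal ℝⁿ is contained in the metric radical g^⊥, i.e. ⟨v, X⟩ = 0 for all v ∈ ℝⁿ and X ∈ g. -/
open Module Matrix

attribute [local instance 100] LieRing.ofAssociativeRing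

namespace NilInvariantPaper

variable {L : Type*} [LieRing L] [LieAlgebra ℝ L]

/-- Our rendering of the smallest algebraic Lie subalgebra of `End ℝ L` containing the
image of the adjoint representation: the smallest Lie subalgebra of endomorphisms
containing every `ad x` and closed under Jordan–Chevalley decompositions. -/
def algebraicHull (L : Type*) [LieRing L] [LieAlgebra ℝ L] :
    LieSubalgebra ℝ (Module.End ℝ L) :=
  sInf {A : LieSubalgebra ℝ (Module.End ℝ L) |
    (∀ x : L, LieAlgebra.ad ℝ L x ∈ A) ∧
    ∀ φ ∈ A, ∀ σ ν : Module.End ℝ L, σ.IsSemisimple → IsNilpotent ν →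
      Commute σ ν → φ = σ + ν → σ ∈ A ∧ ν ∈ A}

/-- A bilinear form on a Lie algebra is *nil-invariant* if every nilpotent operator in
the smallest algebraic Lie subalgebra of endomorphisms containing the adjoint
representation acts skew-symmetrically. -/
def IsNilInvariant (B : LinearMap.BilinForm ℝ L) : Prop :=
  ∀ φ ∈ algebraicHull L, IsNilpotent φ → ∀ x y : L, B (φ x) y = - B x (φ y)

/-- Invariance of a bilinear form by a set of elements of the Lie algebra. -/
def IsInvariantBy (B : LinearMap.BilinForm ℝ L) (H : Set L) : Prop :=
  ∀ X ∈ H, ∀ y z : L, B ⁅X, y⁆ z = - B y ⁅X, z⁆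

/-- A (real) bilinear form is definite if it is positive or negative definite. -/
def IsDefinite {M : Type*} [AddCommGroup M] [Module ℝ M]
    (F : LinearMap.BilinForm ℝ M) : Prop :=
  (∀ x : M, x ≠ 0 → 0 < F x x) ∨ (∀ x : M, x ≠ 0 → F x x < 0)

/-- The elements of the Lie algebra centralizing a given subspace. -/
def centralizerOf (W : Submodule ℝ L) : Submodule ℝ L where
  carrier := {x | ∀ y ∈ W, ⁅x, y⁆ = 0}
  add_mem' := by
    intro a b ha hb y hy
    rw [add_lie, ha y hy, hb y hy, add_zero]
  zero_mem' := by
    intro y hy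
    exact zero_lie y
  smul_mem' := by
    intro c x hx y hy
    rw [smul_lie, hx y hy, smul_zero]

/-- The center of a subspace: its elements that centralize it. -/
def centerOf (W : Submodule ℝ L) : Submodule ℝ L := W ⊓ centralizerOf W

/-- The orthogonal complement of a subspace with respect to a bilinear form. -/
def orthoComp (B : LinearMap.BilinForm ℝ L) (W : Submodule ℝ L) : Submodule ℝ L where
  carrier := {x | ∀ w ∈ W, B x w = 0}
  add_mem' := by
    intro a b ha hb w hw
    simp [ha w hw, hb w hw]
  zero_mem' := by
    intro w hw
    simp
  smul_mem' := by
    intro c x hx w hw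
    simp [hx w hw]

/-- A subspace is totally isotropic for `B` if `B` vanishes identically on it. -/
def IsTotallyIsotropic (B : LinearMap.BilinForm ℝ L) (W : Submodule ℝ L) : Prop :=
  ∀ x ∈ W, ∀ y ∈ W, B x y = 0

/-- The index of (the restriction to `W` of) a bilinear form: the maximal dimension of a
totally isotropic subspace of `W`. -/
noncomputable def formIndexOn (B : LinearMap.BilinForm ℝ L) (W : Submodule ℝ L) : ℕ :=
  sSup {n | ∃ U : Submodule ℝ L, U ≤ W ∧ IsTotallyIsotropic B U ∧ finrank ℝ U = n}

/-- The index of a bilinear form. -/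
noncomputable def formIndex (B : LinearMap.BilinForm ℝ L) : ℕ := formIndexOn B ⊤

/-- Nondegeneracy of the restriction of `B` to a subspace. -/
def IsNondegenerateOn (B : LinearMap.BilinForm ℝ L) (W : Submodule ℝ L) : Prop :=
  ∀ x ∈ W, (∀ y ∈ W, B x y = 0) → x = 0

/-- The restriction of `B` to `W` is definite. -/
def IsDefiniteOn (B : LinearMap.BilinForm ℝ L) (W : Submodule ℝ L) : Prop :=
  (∀ x ∈ W, x ≠ 0 → 0 < B x x) ∨ (∀ x ∈ W, x ≠ 0 → B x x < 0)

/-- The restriction of `B` to `W` is semidefinite. -/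
def IsSemidefiniteOn (B : LinearMap.BilinForm ℝ L) (W : Submodule ℝ L) : Prop :=
  (∀ x ∈ W, 0 ≤ B x x) ∨ (∀ x ∈ W, B x x ≤ 0)

/-- The restriction of `B` to `W` is Lorentzian: nondegenerate of index one. -/
def IsLorentzianOn (B : LinearMap.BilinForm ℝ L) (W : Submodule ℝ L) : Prop :=
  IsNondegenerateOn B W ∧ formIndexOn B W = 1

/-!
Elements of the abelian ideal `ℝⁿ` have nilpotent adjoint, so nil-invariance makes `B` invariant
under `ℝⁿ`. Consequently `B ⁅A, z⁆ w = 0` and `B ⁅A, z⁆ C = -B ⁅C, z⁆ A` for `A, C ∈ so_n` and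
`z, w ∈ ℝⁿ`. Every basis vector is `e_p = E_pk e_k`, so the first identity gives `ℝⁿ ⊥ ℝⁿ`.
Choosing `k ∉ {p, i, j}`, which `n ≥ 4` allows, the second gives
`B e_p E_ij = -B (E_ij e_k) E_pk = 0`, and then `B e_i C = -B (C e_j) E_ij = 0` for every `C`.
-/

lemma ad_mem_algebraicHull (x : L) : LieAlgebra.ad ℝ L x ∈ algebraicHull L := by
  change _ ∈ (algebraicHull L : Set (Module.End ℝ L))
  rw [algebraicHull, LieSubalgebra.coe_sInf]
  exact Set.mem_iInter₂.mpr fun _ hA => hA.1 x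

lemma isNilpotent_ad_of_mem_of_isAbelian {V : LieIdeal ℝ L}
    (hVab : ∀ x ∈ V, ∀ y ∈ V, ⁅x, y⁆ = (0 : L)) {u : L} (hu : u ∈ V) :
    IsNilpotent (LieAlgebra.ad ℝ L u) := by
  refine ⟨2, LinearMap.ext fun x => ?_⟩
  have hux : ⁅u, x⁆ ∈ V := by
    rw [← lie_skew]
    exact V.neg_mem (V.lie_mem hu)
  simpa [pow_two] using hVab u hu _ hux

lemma IsNilInvariant.isInvariantBy_of_isAbelian {B : LinearMap.BilinForm ℝ L}
    (hnil : IsNilInvariant B) {V : LieIdeal ℝ L} (hVab : ∀ x ∈ V, ∀ y ∈ V, ⁅x, y⁆ = (0 : L)) :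
    IsInvariantBy B (V : Set L) := fun u hu y z =>
  hnil _ (ad_mem_algebraicHull u) (isNilpotent_ad_of_mem_of_isAbelian hVab hu) y z

section AbelianIdeal

variable {B : LinearMap.BilinForm ℝ L} {V : LieIdeal ℝ L}

lemma apply_lie_of_mem_eq_zero (hVab : ∀ x ∈ V, ∀ y ∈ V, ⁅x, y⁆ = (0 : L))
    (hinv : IsInvariantBy B (V : Set L)) (x : L) {u w : L} (hu : u ∈ V) (hw : w ∈ V) :
    B ⁅x, u⁆ w = 0 := by
  rw [← lie_skew, map_neg, LinearMap.neg_apply, hinv u hu, hVab u hu w hw, map_zero, neg_zero,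
    neg_zero]

lemma apply_lie_of_mem_eq_neg (hsym : ∀ x y : L, B x y = B y x)
    (hinv : IsInvariantBy B (V : Set L)) (x y : L) {u : L} (hu : u ∈ V) :
    B ⁅x, u⁆ y = -B ⁅y, u⁆ x := by
  rw [← lie_skew, map_neg, LinearMap.neg_apply, hinv u hu, hsym, ← lie_skew u y, map_neg,
    LinearMap.neg_apply, neg_neg]

end AbelianIdeal

section SpecialOrthogonal

variable {n : ℕ}

abbrev so (n : ℕ) := LieAlgebra.Orthogonal.so (Fin n) ℝ

def soSingle (i j : Fin n) : so n :=
  ⟨single i j 1 - single j i 1, by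
    rw [LieAlgebra.Orthogonal.mem_so, transpose_sub, transpose_single, transpose_single, neg_sub]⟩

lemma soSingle_mulVec_single_self {i j : Fin n} (hij : i ≠ j) (x : ℝ) :
    (soSingle i j : Matrix (Fin n) (Fin n) ℝ) *ᵥ Pi.single j x = Pi.single i x := by
  rw [soSingle, sub_mulVec, single_mulVec, single_mulVec]
  ext a
  by_cases hai : a = i <;> by_cases haj : a = j <;> simp_all

lemma soSingle_mulVec_single_of_ne {i j k : Fin n} (hki : k ≠ i) (hkj : k ≠ j) (x : ℝ) :
    (soSingle i j : Matrix (Fin n) (Fin n) ℝ) *ᵥ Pi.single k x = 0 := by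
  rw [soSingle, sub_mulVec, single_mulVec, single_mulVec]
  ext a
  simp [hki.symm, hkj.symm]

lemma exists_ne_ne_ne (hn : 4 ≤ n) (a b c : Fin n) : ∃ k, k ≠ a ∧ k ≠ b ∧ k ≠ c := by
  obtain ⟨k, -, hk⟩ := Finset.exists_mem_notMem_of_card_lt_card (s := {a, b, c})
    (t := Finset.univ) (Finset.card_le_three.trans_lt (by simp; omega))
  simp only [Finset.mem_insert, Finset.mem_singleton, not_or] at hk
  exact ⟨k, hk⟩

variable {M : Type*} [AddCommGroup M] [Module ℝ M]

lemma eq_zero_of_so_mulVec_eq_zero (hn : 2 ≤ n) (ℓ : (Fin n → ℝ) →ₗ[ℝ] M)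
    (h : ∀ (A : so n) z, ℓ ((A : Matrix (Fin n) (Fin n) ℝ) *ᵥ z) = 0) : ℓ = 0 := by
  have : Nontrivial (Fin n) := Fin.nontrivial_iff_two_le.mpr hn
  refine LinearMap.pi_ext fun i x => ?_
  obtain ⟨j, hji⟩ := exists_ne i
  rw [← soSingle_mulVec_single_self hji.symm, h, LinearMap.zero_apply]

lemma eq_zero_of_so_mulVec_antisymm (hn : 4 ≤ n) (γ : so n → (Fin n → ℝ) →ₗ[ℝ] M)
    (h : ∀ (A C : so n) z, γ C ((A : Matrix (Fin n) (Fin n) ℝ) *ᵥ z) =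
      -γ A ((C : Matrix (Fin n) (Fin n) ℝ) *ᵥ z))
    (C : so n) : γ C = 0 := by
  have hsingle : ∀ i j : Fin n, γ (soSingle i j) = 0 := fun i j =>
    LinearMap.pi_ext fun p x => by
      obtain ⟨k, hkp, hki, hkj⟩ := exists_ne_ne_ne hn p i j
      rw [← soSingle_mulVec_single_self hkp.symm, h, soSingle_mulVec_single_of_ne hki hkj,
        map_zero, neg_zero, LinearMap.zero_apply]
  refine LinearMap.pi_ext fun i x => ?_
  obtain ⟨j, hji, -, -⟩ := exists_ne_ne_ne hn i i i
  rw [← soSingle_mulVec_single_self hji.symm, h, hsingle, LinearMap.zero_apply, neg_zero,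
    LinearMap.zero_apply]

end SpecialOrthogonal

section SoAction

variable {n : ℕ} {B : LinearMap.BilinForm ℝ L} {V : LieIdeal ℝ L}
  {ι : (Fin n → ℝ) →ₗ[ℝ] L} {ρ : so n → L}

lemma apply_translation_translation_eq_zero (hVab : ∀ x ∈ V, ∀ y ∈ V, ⁅x, y⁆ = (0 : L))
    (hinv : IsInvariantBy B (V : Set L)) (hιV : ∀ z, ι z ∈ V)
    (hρ : ∀ (A : so n) z, ι ((A : Matrix (Fin n) (Fin n) ℝ) *ᵥ z) = ⁅ρ A, ι z⁆) (hn : 2 ≤ n)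
    (z : Fin n → ℝ) {w : L} (hw : w ∈ V) : B (ι z) w = 0 := by
  have h := eq_zero_of_so_mulVec_eq_zero hn ((B ∘ₗ ι).flip w) fun A z => by
    simpa [hρ] using apply_lie_of_mem_eq_zero hVab hinv (ρ A) (hιV z) hw
  simpa using LinearMap.congr_fun h z

lemma apply_translation_rotation_eq_zero (hsym : ∀ x y : L, B x y = B y x)
    (hinv : IsInvariantBy B (V : Set L)) (hιV : ∀ z, ι z ∈ V)
    (hρ : ∀ (A : so n) z, ι ((A : Matrix (Fin n) (Fin n) ℝ) *ᵥ z) = ⁅ρ A, ι z⁆) (hn : 4 ≤ n)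
    (z : Fin n → ℝ) (C : so n) : B (ι z) (ρ C) = 0 := by
  have h := eq_zero_of_so_mulVec_antisymm hn (fun C => (B ∘ₗ ι).flip (ρ C)) (fun A C z => by
    simpa [hρ] using apply_lie_of_mem_eq_neg hsym hinv (ρ A) (ρ C) (hιV z)) C
  simpa using LinearMap.congr_fun h z

end SoAction

theorem euclidean_translations_in_radical_general
    {L : Type*} [LieRing L] [LieAlgebra ℝ L]
    (n : ℕ) (hn : 4 ≤ n)
    (B : LinearMap.BilinForm ℝ L) (hsym : ∀ x y : L, B x y = B y x)
    (hnil : IsNilInvariant B)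
    (K : LieSubalgebra ℝ L) (V : LieIdeal ℝ L)
    (hVab : ∀ x ∈ V, ∀ y ∈ V, ⁅x, y⁆ = (0 : L))
    (hsum : K.toSubmodule ⊔ V.toSubmodule = ⊤)
    (e : ↥V ≃ₗ[ℝ] (Fin n → ℝ))
    (f : ↥K ≃ₗ⁅ℝ⁆ ↥(LieAlgebra.Orthogonal.so (Fin n) ℝ))
    (haction : ∀ (x : ↥K) (v : ↥V),
      e ⟨⁅(x : L), (v : L)⁆, V.lie_mem v.2⟩ =
        Matrix.mulVec ((f x : ↥(LieAlgebra.Orthogonal.so (Fin n) ℝ)) :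
          Matrix (Fin n) (Fin n) ℝ) (e v)) :
    ∀ v ∈ V, ∀ x : L, B v x = 0 := by
  have hinv := hnil.isInvariantBy_of_isAbelian hVab
  let ι : (Fin n → ℝ) →ₗ[ℝ] L := V.toSubmodule.subtype ∘ₗ e.symm.toLinearMap
  let ρ : so n → L := fun A => f.symm A
  have hρ : ∀ (A : so n) z, ι ((A : Matrix (Fin n) (Fin n) ℝ) *ᵥ z) = ⁅ρ A, ι z⁆ := fun A z => by
    have h := haction (f.symm A) (e.symm z)
    rw [f.apply_symm_apply, e.apply_symm_apply, ← e.eq_symm_apply] at h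
    exact congrArg Subtype.val h.symm
  have hιV : ∀ z, ι z ∈ V := fun z => (e.symm z).2
  intro v hv x
  obtain ⟨k, hk, w, hw, rfl⟩ := Submodule.mem_sup.mp (hsum ▸ Submodule.mem_top : x ∈ _)
  have hv' : v = ι (e ⟨v, hv⟩) := by simp [ι]
  have hk' : k = ρ (f ⟨k, hk⟩) := by simp [ρ]
  rw [map_add, hv', hk', apply_translation_rotation_eq_zero hsym hinv hιV hρ hn,
    apply_translation_translation_eq_zero hVab hinv hιV hρ (by omega) _ hw, add_zero]

/-- Theorem on Euclidean Lie algebras, `n ≥ 4`.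
Let `g = so_n ⋉ ℝⁿ` be the Euclidean Lie algebra (presented as a real Lie algebra `L`
with an abelian ideal `V ≅ ℝⁿ`, a complementary subalgebra `K ≅ so_n`, the bracket of
`K` on `V` corresponding to matrix–vector multiplication), `n ≥ 4`, and let `B` be a
nil-invariant symmetric bilinear form on `g`.  Then `ℝⁿ ⊆ g^⊥`. -/
theorem euclidean_translations_in_radical
    {L : Type*} [LieRing L] [LieAlgebra ℝ L] [Module.Finite ℝ L]
    (n : ℕ) (hn : 4 ≤ n)
    (B : LinearMap.BilinForm ℝ L) (hsym : ∀ x y : L, B x y = B y x)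
    (hnil : IsNilInvariant B)
    (K : LieSubalgebra ℝ L) (V : LieIdeal ℝ L)
    (hVab : ∀ x ∈ V, ∀ y ∈ V, ⁅x, y⁆ = (0 : L))
    (hdisj : K.toSubmodule ⊓ V.toSubmodule = ⊥)
    (hsum : K.toSubmodule ⊔ V.toSubmodule = ⊤)
    (e : ↥V ≃ₗ[ℝ] (Fin n → ℝ))
    (f : ↥K ≃ₗ⁅ℝ⁆ ↥(LieAlgebra.Orthogonal.so (Fin n) ℝ))
    (haction : ∀ (x : ↥K) (v : ↥V),
      e ⟨⁅(x : L), (v : L)⁆, V.lie_mem v.2⟩ =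
        Matrix.mulVec ((f x : ↥(LieAlgebra.Orthogonal.so (Fin n) ℝ)) :
          Matrix (Fin n) (Fin n) ℝ) (e v)) :
    ∀ v ∈ V, ∀ x : L, B v x = 0 :=
  euclidean_translations_in_radical_general n hn B hsym hnil K V hVab hsum e f haction

end NilInvariantPaper
end
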